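/- arXiv:1703.06174 — 3 statements merged into one kernel-verified Lean document; each statement's English description precedes it below -/
import Mathlib

section
/- Let Q be a finite quiver with an admissible action of a finite group G, let k be a field, and let M be a representation of Q over k. Let π_λ denote the push-down functor to representations of the orbit quiver Q_G, defined by (π_λ M)(Gx) = ⊕_{y ∈ Gx} M(y) on vertices and the analogous direct sum on arrows, and let π^λ denote its pull-up (right adjoint), defined by restricting a Q_G-representation along the quotient map of quivers. Then there is an isomorphism of representations of Q: π^λ(π_λ(M)) ≅ ⊕_{g ∈ G} g·M, where g·M denotes the twist of M by the automorphism g. -/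
open DirectSum

set_option linter.unusedSectionVars false

section Aux

variable {k G V : Type} [Field k] [Group G] [DecidableEq V] [DecidableEq G]
  [MulAction G V]
  (M : V → Type) [∀ v, AddCommGroup (M v)] [∀ v, Module k (M v)]

/-- transport along an equality of vertices -/
def lcast {u v : V} (h : u = v) : M u ≃ₗ[k] M v := by
  subst h; exact LinearEquiv.refl k (M u)

lemma dcast_eq_lcast {u v : V} (h : u = v) (m : M u) :
    h ▸ m = lcast (k := k) M h m := by subst h; rfl

lemma lcast_lcast {u v w : V} (h : u = v) (h' : v = w) (m : M u) :
    lcast (k := k) M h' (lcast (k := k) M h m) = lcast (k := k) M (h.trans h') m := by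
  subst h; subst h'; rfl

lemma lcast_rfl {u : V} (m : M u) : lcast (k := k) M rfl m = m := rfl

lemma lcast_cancel {u v : V} (h : u = v) (m : M v) :
    lcast (k := k) M h (lcast (k := k) M h.symm m) = m := by subst h; rfl

lemma lof_orbit (x : V) {u v : V} (h : u = v) (hu : u ∈ MulAction.orbit G x)
    (hv : v ∈ MulAction.orbit G x) (m : M u) :
    DirectSum.lof k (MulAction.orbit G x) (fun y => M y) ⟨v, hv⟩ (lcast (k := k) M h m)
      = DirectSum.lof k (MulAction.orbit G x) (fun y => M y) ⟨u, hu⟩ m := by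
  subst h; rfl

/-- the bijection `G ≃ orbit G x`, `g ↦ g⁻¹ • x`, for a free action. -/
noncomputable def β (hfree : ∀ g : G, g ≠ 1 → ∀ v : V, g • v ≠ v) (x : V) :
    G ≃ MulAction.orbit G x :=
  Equiv.ofBijective (fun g => ⟨g⁻¹ • x, MulAction.mem_orbit x g⁻¹⟩)
    ⟨by
      intro g h hgh
      have h1 : g⁻¹ • x = h⁻¹ • x := congrArg Subtype.val hgh
      have h2 : (h * g⁻¹) • x = x := by
        rw [mul_smul, h1, smul_smul, mul_inv_cancel, one_smul]
      by_contra hne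
      refine hfree (h * g⁻¹) ?_ x h2
      intro h0
      exact hne (mul_inv_eq_one.mp h0).symm,
     by
      rintro ⟨v, hv⟩
      obtain ⟨g, hg⟩ := hv
      exact ⟨g⁻¹, Subtype.ext (by simp [hg])⟩⟩

variable (k) in
noncomputable def eIso (hfree : ∀ g : G, g ≠ 1 → ∀ v : V, g • v ≠ v) (x : V) :
    (⨁ y : MulAction.orbit G x, M y) ≃ₗ[k] ⨁ g : G, M (g⁻¹ • x) :=
  DirectSum.lequivCongrLeft k (β (G := G) hfree x).symm

lemma eIso_lof (hfree : ∀ g : G, g ≠ 1 → ∀ v : V, g • v ≠ v) (x : V) (g : G)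
    (p : g⁻¹ • x ∈ MulAction.orbit G x) (m : M (g⁻¹ • x)) :
    eIso k M hfree x (DirectSum.lof k (MulAction.orbit G x) (fun y => M y) ⟨g⁻¹ • x, p⟩ m)
      = DirectSum.lof k G (fun h => M (h⁻¹ • x)) g m := by
  classical
  apply DFinsupp.ext
  intro h
  have : eIso k M hfree x (DirectSum.lof k (MulAction.orbit G x) (fun y => M y) ⟨g⁻¹ • x, p⟩ m) h
      = (DirectSum.lof k (MulAction.orbit G x) (fun y => M y) ⟨g⁻¹ • x, p⟩ m) (β (G := G) hfree x h) :=
    DirectSum.lequivCongrLeft_apply _ _ _ _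
  rw [this]
  have hβg : β (G := G) hfree x g = (⟨g⁻¹ • x, p⟩ : MulAction.orbit G x) := rfl
  by_cases hgh : g = h
  · subst hgh
    erw [DFinsupp.single_apply, DFinsupp.single_apply]
    rw [dif_pos hβg.symm, dif_pos rfl]
  · have h1 : (⟨g⁻¹ • x, p⟩ : MulAction.orbit G x) ≠ β (G := G) hfree x h := by
      rw [← hβg]
      exact fun hc => hgh ((β (G := G) hfree x).injective hc)
    erw [DFinsupp.single_apply, DFinsupp.single_apply]
    rw [dif_neg h1, dif_neg hgh]
    rfl

end Aux

set_option maxHeartbeats 1000000 in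
/-- For an admissible action of a finite group `G` on a quiver and a
representation `M` (spaces `M v`, structure maps `f a`), the pull-up of the
push-down of `M` (structure maps `FF`, characterized on components by `f`) is
isomorphic, as a representation, to the direct sum of the twists `g • M`
(structure maps `TT`, characterized on components by `f` as well). -/
theorem stmt_3 {k G V A : Type} [Field k] [Group G] [Fintype G]
    [DecidableEq V] [DecidableEq G]
    [MulAction G V] [MulAction G A]
    (s t : A → V)
    (hs : ∀ (g : G) (a : A), s (g • a) = g • s a)
    (ht : ∀ (g : G) (a : A), t (g • a) = g • t a)
    (hfree : ∀ g : G, g ≠ 1 → ∀ v : V, g • v ≠ v)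
    (M : V → Type) [∀ v, AddCommGroup (M v)] [∀ v, Module k (M v)]
    (f : ∀ a : A, M (s a) →ₗ[k] M (t a))
    -- the structure maps of the pull-up of the push-down of `M`:
    (FF : ∀ a : A,
      (⨁ y : MulAction.orbit G (s a), M y) →ₗ[k] ⨁ z : MulAction.orbit G (t a), M z)
    (hFF : ∀ (a : A) (g : G) (m : M (s (g • a))),
      FF a (DirectSum.lof k (MulAction.orbit G (s a)) (fun y => M y)
          ⟨s (g • a), by rw [hs]; exact MulAction.mem_orbit _ _⟩ m)
        = DirectSum.lof k (MulAction.orbit G (t a)) (fun z => M z)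
          ⟨t (g • a), by rw [ht]; exact MulAction.mem_orbit _ _⟩ (f (g • a) m))
    -- the structure maps of the direct sum of the twists `g • M`:
    (TT : ∀ a : A, (⨁ g : G, M (g⁻¹ • s a)) →ₗ[k] ⨁ g : G, M (g⁻¹ • t a))
    (hTT : ∀ (a : A) (g : G) (m : M (s (g⁻¹ • a))),
      TT a (DirectSum.lof k G (fun h => M (h⁻¹ • s a)) g ((hs g⁻¹ a) ▸ m))
        = DirectSum.lof k G (fun h => M (h⁻¹ • t a)) g ((ht g⁻¹ a) ▸ (f (g⁻¹ • a) m))) :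
    -- conclusion: an isomorphism of representations
    ∃ e : ∀ x : V, (⨁ y : MulAction.orbit G x, M y) ≃ₗ[k] ⨁ g : G, M (g⁻¹ • x),
      ∀ a : A, (e (t a)).toLinearMap ∘ₗ FF a = TT a ∘ₗ (e (s a)).toLinearMap := by
  refine ⟨fun x => eIso k M hfree x, fun a => ?_⟩
  apply DirectSum.linearMap_ext
  rintro ⟨yv, hyv⟩
  obtain ⟨g, hg⟩ : ∃ g : G, β (G := G) hfree (s a) g = ⟨yv, hyv⟩ :=
    ⟨(β (G := G) hfree (s a)).symm ⟨yv, hyv⟩, Equiv.apply_symm_apply _ _⟩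
  have hgv : g⁻¹ • s a = yv := congrArg Subtype.val hg
  subst hgv
  apply LinearMap.ext
  intro m
  have h1 : s (g⁻¹ • a) = g⁻¹ • s a := hs g⁻¹ a
  have h2 : t (g⁻¹ • a) = g⁻¹ • t a := ht g⁻¹ a
  have hv1 : s (g⁻¹ • a) ∈ MulAction.orbit G (s a) := by
    rw [h1]; exact MulAction.mem_orbit _ _
  have hv2 : t (g⁻¹ • a) ∈ MulAction.orbit G (t a) := by
    rw [h2]; exact MulAction.mem_orbit _ _
  have hv2' : g⁻¹ • t a ∈ MulAction.orbit G (t a) := MulAction.mem_orbit _ _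
  set m' : M (s (g⁻¹ • a)) := (lcast (k := k) M h1.symm) m with hm'
  simp only [LinearMap.comp_apply, LinearEquiv.coe_coe]
  -- left hand side
  have L1 : DirectSum.lof k (MulAction.orbit G (s a)) (fun y => M y) ⟨g⁻¹ • s a, hyv⟩ m
      = DirectSum.lof k (MulAction.orbit G (s a)) (fun y => M y) ⟨s (g⁻¹ • a), hv1⟩ m' := by
    rw [hm', ← lof_orbit (k := k) M (s a) h1.symm hyv hv1 m]
  rw [L1, hFF a g⁻¹ m']
  have L2 : DirectSum.lof k (MulAction.orbit G (t a)) (fun z => M z) ⟨t (g⁻¹ • a), hv2⟩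
        (f (g⁻¹ • a) m')
      = DirectSum.lof k (MulAction.orbit G (t a)) (fun z => M z) ⟨g⁻¹ • t a, hv2'⟩
        (lcast (k := k) M h2 (f (g⁻¹ • a) m')) := by
    rw [lof_orbit (k := k) M (t a) h2 hv2 hv2']
  rw [L2, eIso_lof]
  -- right hand side
  rw [← L1, eIso_lof]
  have R1 : DirectSum.lof k G (fun h => M (h⁻¹ • s a)) g m
      = DirectSum.lof k G (fun h => M (h⁻¹ • s a)) g ((hs g⁻¹ a) ▸ m') := by
    congr 1
    rw [dcast_eq_lcast (k := k), hm', lcast_cancel]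
  rw [R1, hTT a g m']
  congr 1
  rw [dcast_eq_lcast (k := k)]
end

section
/- Let Q be a finite quiver with an admissible action of a finite group G, and let π_λ be the push-down functor from representations of Q to representations of the orbit quiver Q_G. Then for all finite-dimensional representations M, N of Q there is a natural isomorphism of vector spaces ⊕_{g ∈ G} Hom_Q(M, g·N) ≅ Hom_{Q_G}(π_λ M, π_λ N), induced by applying π_λ to each morphism M → g·N and summing. -/
open DirectSum

set_option linter.unusedSectionVars false
set_option maxHeartbeats 1000000

namespace Stmt4

variable {k G V A : Type} [Field k] [Group G] [Fintype G]
  [DecidableEq V] [MulAction G V] [MulAction G A]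

/-- The quotient map `V → V/G` identifies a `g`-translate with the original. -/
theorem mk_smul (g : G) (v : V) :
    Quotient.mk (MulAction.orbitRel G V) (g • v)
      = Quotient.mk (MulAction.orbitRel G V) v := by
  apply Quotient.sound
  exact MulAction.mem_orbit v g

/-- The map on orbits induced by a `G`-equivariant map `u : A → V`
(e.g. the source or target map of the quiver); this gives the source and
target maps of the orbit quiver. -/
def qmap (u : A → V) (hu : ∀ (g : G) (a : A), u (g • a) = g • u a) :
    Quotient (MulAction.orbitRel G A) → Quotient (MulAction.orbitRel G V) :=
  Quotient.lift (fun a => Quotient.mk (MulAction.orbitRel G V) (u a)) (by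
    intro a b hab
    obtain ⟨g, hg⟩ := (hab : a ∈ MulAction.orbit G b)
    show Quotient.mk (MulAction.orbitRel G V) (u a)
      = Quotient.mk (MulAction.orbitRel G V) (u b)
    rw [← hg, hu]
    exact mk_smul g (u b))

/-- The push-down to the orbit quiver of a morphism `φ : M → g·N` of
representations of the original quiver, at the orbit `c`: on the component
indexed by `y` it is `φ y` followed by the inclusion at index `g⁻¹ • y`. -/
noncomputable def pdHom (M N : V → Type)
    [∀ v, AddCommGroup (M v)] [∀ v, Module k (M v)]
    [∀ v, AddCommGroup (N v)] [∀ v, Module k (N v)]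
    (g : G) (φ : ∀ v : V, M v →ₗ[k] N (g⁻¹ • v))
    (c : Quotient (MulAction.orbitRel G V)) :
    (⨁ y : {v : V // Quotient.mk (MulAction.orbitRel G V) v = c}, M y.1) →ₗ[k]
      ⨁ y : {v : V // Quotient.mk (MulAction.orbitRel G V) v = c}, N y.1 :=
  DirectSum.toModule k _ _ (fun y =>
    (DirectSum.lof k {v : V // Quotient.mk (MulAction.orbitRel G V) v = c}
        (fun z => N z.1) ⟨g⁻¹ • y.1, (mk_smul g⁻¹ y.1).trans y.2⟩) ∘ₗ φ y.1)

/-- orbit subtype -/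
abbrev OrbV (c : Quotient (MulAction.orbitRel G V)) : Type :=
  {v : V // Quotient.mk (MulAction.orbitRel G V) v = c}

section Aux2

variable (N : V → Type) [∀ v, AddCommGroup (N v)] [∀ v, Module k (N v)]

theorem lof_cast {c : Quotient (MulAction.orbitRel G V)} {w w' : V} (p : w = w')
    (h : Quotient.mk (MulAction.orbitRel G V) w = c)
    (h' : Quotient.mk (MulAction.orbitRel G V) w' = c) (x : N w) (x' : N w')
    (hx : HEq x x') :
    DirectSum.lof k (OrbV c) (fun z => N z.1) ⟨w', h'⟩ x'
      = DirectSum.lof k (OrbV c) (fun z => N z.1) ⟨w, h⟩ x := by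
  subst p
  rw [eq_of_heq hx]

theorem component_cast {c : Quotient (MulAction.orbitRel G V)} {w w' : V} (p : w = w')
    (h : Quotient.mk (MulAction.orbitRel G V) w = c)
    (h' : Quotient.mk (MulAction.orbitRel G V) w' = c) (x : N w) (x' : N w')
    (hx : HEq x x') :
    DirectSum.component k (OrbV c) (fun z => N z.1) ⟨w', h'⟩
      (DirectSum.lof k (OrbV c) (fun z => N z.1) ⟨w, h⟩ x) = x' := by
  subst p
  rw [← eq_of_heq hx]
  exact DirectSum.component.lof_self (R := k) (ι := OrbV c) (M := fun z => N z.1) ⟨w, h⟩ x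

theorem smul_cancel (hfree : ∀ g : G, g ≠ 1 → ∀ v : V, g • v ≠ v)
    {g h : G} {v : V} (e : g • v = h • v) : g = h := by
  by_contra hne
  refine hfree (h⁻¹ * g) (fun h1 => hne ?_) v ?_
  · rw [inv_mul_eq_one] at h1; exact h1.symm
  · rw [mul_smul, e, inv_smul_smul]

theorem orbBij (hfree : ∀ g : G, g ≠ 1 → ∀ v : V, g • v ≠ v) (v : V) :
    Function.Bijective (fun g : G =>
      (⟨g⁻¹ • v, mk_smul g⁻¹ v⟩ : OrbV (Quotient.mk (MulAction.orbitRel G V) v))) := by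
  constructor
  · intro g h e
    have e' : g⁻¹ • v = h⁻¹ • v := congrArg Subtype.val e
    have := smul_cancel hfree e'
    exact inv_injective this
  · rintro ⟨w, hw⟩
    obtain ⟨g, hg⟩ := Quotient.exact hw
    exact ⟨g⁻¹, Subtype.ext (by simp [hg])⟩

theorem component_sum (hfree : ∀ g : G, g ≠ 1 → ∀ v : V, g • v ≠ v) (g : G) (v : V)
    (y : ∀ h : G, N (h⁻¹ • v)) :
    DirectSum.component k (OrbV (Quotient.mk (MulAction.orbitRel G V) v)) (fun z => N z.1)
        ⟨g⁻¹ • v, mk_smul g⁻¹ v⟩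
        (∑ h : G, DirectSum.lof k (OrbV (Quotient.mk (MulAction.orbitRel G V) v))
          (fun z => N z.1) ⟨h⁻¹ • v, mk_smul h⁻¹ v⟩ (y h))
      = y g := by
  rw [map_sum, Finset.sum_eq_single g]
  · exact DirectSum.component.lof_self (R := k)
      (ι := OrbV (Quotient.mk (MulAction.orbitRel G V) v)) (M := fun z => N z.1) _ _
  · intro h _ hne
    rw [DirectSum.component.of, dif_neg]
    intro he
    exact hne (inv_injective (smul_cancel hfree (congrArg Subtype.val he)))
  · simp

theorem sum_components (hfree : ∀ g : G, g ≠ 1 → ∀ v : V, g • v ≠ v) (v : V)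
    (x : ⨁ w : OrbV (Quotient.mk (MulAction.orbitRel G V) v), N w.1) :
    ∑ g : G, DirectSum.lof k (OrbV (Quotient.mk (MulAction.orbitRel G V) v))
        (fun z => N z.1) ⟨g⁻¹ • v, mk_smul g⁻¹ v⟩
        (DirectSum.component k (OrbV (Quotient.mk (MulAction.orbitRel G V) v))
          (fun z => N z.1) ⟨g⁻¹ • v, mk_smul g⁻¹ v⟩ x) = x := by
  classical
  letI : Fintype (OrbV (Quotient.mk (MulAction.orbitRel G V) v)) :=
    Fintype.ofBijective _ (orbBij hfree v)
  conv_rhs => rw [← DirectSum.sum_univ_of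
    (β := fun z : OrbV (Quotient.mk (MulAction.orbitRel G V) v) => N z.1) x]
  exact Fintype.sum_bijective _ (orbBij hfree v) _ _ (fun g => rfl)

end Aux2

theorem pdHom_lof (M N : V → Type)
    [∀ v, AddCommGroup (M v)] [∀ v, Module k (M v)]
    [∀ v, AddCommGroup (N v)] [∀ v, Module k (N v)]
    (g : G) (φ : ∀ v : V, M v →ₗ[k] N (g⁻¹ • v)) (c : Quotient (MulAction.orbitRel G V))
    (w : V) (hw : Quotient.mk (MulAction.orbitRel G V) w = c) (m : M w) :
    pdHom M N g φ c (DirectSum.lof k (OrbV c) (fun y => M y.1) ⟨w, hw⟩ m)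
      = DirectSum.lof k (OrbV c) (fun y => N y.1)
          ⟨g⁻¹ • w, (mk_smul g⁻¹ w).trans hw⟩ (φ w m) :=
  DirectSum.toModule_lof k _ _

end Stmt4
namespace Stmt4

variable {k G V A : Type} [Field k] [Group G] [Fintype G]
  [DecidableEq V] [MulAction G V] [MulAction G A]

/-- `π_λ` is a `G`-precovering: given representations `M, N` of the quiver with
push-downs to the orbit quiver having structure maps `FM, FN` (characterized
componentwise by `fM, fN`), the map sending a family of morphisms
`φ_g : M → g·N` to the sum of their push-downs is a bijection
`⊕_{g ∈ G} Hom_Q(M, g·N) ≅ Hom_{Q_G}(π_λ M, π_λ N)`. -/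
theorem stmt_4
    (s t : A → V)
    (hs : ∀ (g : G) (a : A), s (g • a) = g • s a)
    (ht : ∀ (g : G) (a : A), t (g • a) = g • t a)
    (hfree : ∀ g : G, g ≠ 1 → ∀ v : V, g • v ≠ v)
    (M : V → Type) [∀ v, AddCommGroup (M v)] [∀ v, Module k (M v)]
    (fM : ∀ a : A, M (s a) →ₗ[k] M (t a))
    (N : V → Type) [∀ v, AddCommGroup (N v)] [∀ v, Module k (N v)]
    (fN : ∀ a : A, N (s a) →ₗ[k] N (t a))
    (FM : ∀ d : Quotient (MulAction.orbitRel G A),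
      (⨁ y : {v : V // Quotient.mk (MulAction.orbitRel G V) v = qmap s hs d}, M y.1) →ₗ[k]
        ⨁ y : {v : V // Quotient.mk (MulAction.orbitRel G V) v = qmap t ht d}, M y.1)
    (hFM : ∀ (a : A) (m : M (s a)),
      FM (Quotient.mk (MulAction.orbitRel G A) a)
          (DirectSum.lof k
            {v : V // Quotient.mk (MulAction.orbitRel G V) v
                = qmap s hs (Quotient.mk (MulAction.orbitRel G A) a)}
            (fun y => M y.1) ⟨s a, rfl⟩ m)
        = DirectSum.lof k
            {v : V // Quotient.mk (MulAction.orbitRel G V) v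
                = qmap t ht (Quotient.mk (MulAction.orbitRel G A) a)}
            (fun y => M y.1) ⟨t a, rfl⟩ (fM a m))
    (FN : ∀ d : Quotient (MulAction.orbitRel G A),
      (⨁ y : {v : V // Quotient.mk (MulAction.orbitRel G V) v = qmap s hs d}, N y.1) →ₗ[k]
        ⨁ y : {v : V // Quotient.mk (MulAction.orbitRel G V) v = qmap t ht d}, N y.1)
    (hFN : ∀ (a : A) (m : N (s a)),
      FN (Quotient.mk (MulAction.orbitRel G A) a)
          (DirectSum.lof k
            {v : V // Quotient.mk (MulAction.orbitRel G V) v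
                = qmap s hs (Quotient.mk (MulAction.orbitRel G A) a)}
            (fun y => N y.1) ⟨s a, rfl⟩ m)
        = DirectSum.lof k
            {v : V // Quotient.mk (MulAction.orbitRel G V) v
                = qmap t ht (Quotient.mk (MulAction.orbitRel G A) a)}
            (fun y => N y.1) ⟨t a, rfl⟩ (fN a m)) :
    ∃ Φ : (∀ g : G, {φ : ∀ v : V, M v →ₗ[k] N (g⁻¹ • v) //
            ∀ (a : A) (x : M (s a)),
              φ (t a) (fM a x)
                = (ht g⁻¹ a) ▸ (fN (g⁻¹ • a) ((hs g⁻¹ a).symm ▸ (φ (s a) x)))}) ≃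
        {Ψ : ∀ c : Quotient (MulAction.orbitRel G V),
            (⨁ y : {v : V // Quotient.mk (MulAction.orbitRel G V) v = c}, M y.1) →ₗ[k]
              ⨁ y : {v : V // Quotient.mk (MulAction.orbitRel G V) v = c}, N y.1 //
          ∀ d : Quotient (MulAction.orbitRel G A),
            Ψ (qmap t ht d) ∘ₗ FM d = FN d ∘ₗ Ψ (qmap s hs d)},
      ∀ (φ : ∀ g : G, {φ : ∀ v : V, M v →ₗ[k] N (g⁻¹ • v) //
            ∀ (a : A) (x : M (s a)),
              φ (t a) (fM a x)
                = (ht g⁻¹ a) ▸ (fN (g⁻¹ • a) ((hs g⁻¹ a).symm ▸ (φ (s a) x)))})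
        (c : Quotient (MulAction.orbitRel G V)),
        (Φ φ).1 c = ∑ g : G, pdHom M N g (φ g).1 c := by
  classical
  -- generalized structure-map identities
  have hFM' : ∀ (d : Quotient (MulAction.orbitRel G A)) (b : A)
      (hb : Quotient.mk (MulAction.orbitRel G A) b = d)
      (hsb : Quotient.mk (MulAction.orbitRel G V) (s b) = qmap s hs d)
      (htb : Quotient.mk (MulAction.orbitRel G V) (t b) = qmap t ht d)
      (x : M (s b)),
      FM d (DirectSum.lof k (OrbV (qmap s hs d)) (fun y => M y.1) ⟨s b, hsb⟩ x)
        = DirectSum.lof k (OrbV (qmap t ht d)) (fun y => M y.1) ⟨t b, htb⟩ (fM b x) := by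
    intro d b hb
    subst hb
    intro hsb htb x
    exact hFM b x
  have hFN' : ∀ (d : Quotient (MulAction.orbitRel G A)) (b : A)
      (hb : Quotient.mk (MulAction.orbitRel G A) b = d)
      (hsb : Quotient.mk (MulAction.orbitRel G V) (s b) = qmap s hs d)
      (htb : Quotient.mk (MulAction.orbitRel G V) (t b) = qmap t ht d)
      (x : N (s b)),
      FN d (DirectSum.lof k (OrbV (qmap s hs d)) (fun y => N y.1) ⟨s b, hsb⟩ x)
        = DirectSum.lof k (OrbV (qmap t ht d)) (fun y => N y.1) ⟨t b, htb⟩ (fN b x) := by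
    intro d b hb
    subst hb
    intro hsb htb x
    exact hFN b x
  have mkA_smul : ∀ (g : G) (a : A), Quotient.mk (MulAction.orbitRel G A) (g • a)
      = Quotient.mk (MulAction.orbitRel G A) a :=
    fun g a => Quotient.sound (MulAction.mem_orbit a g)
  have pfS : ∀ (g : G) (a : A), Quotient.mk (MulAction.orbitRel G V) (g⁻¹ • s a)
      = qmap s hs (Quotient.mk (MulAction.orbitRel G A) a) := fun g a => mk_smul g⁻¹ (s a)
  have pfS' : ∀ (g : G) (a : A), Quotient.mk (MulAction.orbitRel G V) (s (g⁻¹ • a))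
      = qmap s hs (Quotient.mk (MulAction.orbitRel G A) a) := fun g a => by
    rw [hs]; exact mk_smul g⁻¹ (s a)
  have pfT : ∀ (g : G) (a : A), Quotient.mk (MulAction.orbitRel G V) (g⁻¹ • t a)
      = qmap t ht (Quotient.mk (MulAction.orbitRel G A) a) := fun g a => mk_smul g⁻¹ (t a)
  have pfT' : ∀ (g : G) (a : A), Quotient.mk (MulAction.orbitRel G V) (t (g⁻¹ • a))
      = qmap t ht (Quotient.mk (MulAction.orbitRel G A) a) := fun g a => by
    rw [ht]; exact mk_smul g⁻¹ (t a)
  -- FN applied to a translated generator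
  have FNlof : ∀ (g : G) (a : A) (y : N (g⁻¹ • s a)),
      FN (Quotient.mk (MulAction.orbitRel G A) a)
          (DirectSum.lof k (OrbV (qmap s hs (Quotient.mk (MulAction.orbitRel G A) a)))
            (fun z => N z.1) ⟨g⁻¹ • s a, pfS g a⟩ y)
        = DirectSum.lof k (OrbV (qmap t ht (Quotient.mk (MulAction.orbitRel G A) a)))
            (fun z => N z.1) ⟨t (g⁻¹ • a), pfT' g a⟩
            (fN (g⁻¹ • a) ((hs g⁻¹ a).symm ▸ y)) := by
    intro g a y
    have e := lof_cast (k := k) N ((hs g⁻¹ a).symm) (pfS g a) (pfS' g a) y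
      ((hs g⁻¹ a).symm ▸ y) (HEq.symm (eqRec_heq _ _))
    rw [← e]
    exact hFN' _ (g⁻¹ • a) (mkA_smul g⁻¹ a) _ _ _
  -- key per-g computation for the forward direction
  have key : ∀ (g : G) (φg : ∀ v : V, M v →ₗ[k] N (g⁻¹ • v)),
      (∀ (a : A) (x : M (s a)), φg (t a) (fM a x)
        = (ht g⁻¹ a) ▸ (fN (g⁻¹ • a) ((hs g⁻¹ a).symm ▸ (φg (s a) x)))) →
      ∀ (a : A) (x : M (s a)),
      DirectSum.lof k (OrbV (qmap t ht (Quotient.mk (MulAction.orbitRel G A) a)))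
          (fun z => N z.1) ⟨g⁻¹ • t a, pfT g a⟩ (φg (t a) (fM a x))
        = FN (Quotient.mk (MulAction.orbitRel G A) a)
            (DirectSum.lof k (OrbV (qmap s hs (Quotient.mk (MulAction.orbitRel G A) a)))
              (fun z => N z.1) ⟨g⁻¹ • s a, pfS g a⟩ (φg (s a) x)) := by
    intro g φg hφ a x
    rw [FNlof g a, hφ a x]
    exact lof_cast (k := k) N (ht g⁻¹ a) (pfT' g a) (pfT g a) _ _
      (HEq.symm (eqRec_heq _ _))
  -- commutation of the sum of push-downs
  have prop : ∀ (φf : ∀ g : G, {φ : ∀ v : V, M v →ₗ[k] N (g⁻¹ • v) //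
        ∀ (a : A) (x : M (s a)), φ (t a) (fM a x)
          = (ht g⁻¹ a) ▸ (fN (g⁻¹ • a) ((hs g⁻¹ a).symm ▸ (φ (s a) x)))})
      (d : Quotient (MulAction.orbitRel G A)),
      (∑ g : G, pdHom M N g (φf g).1 (qmap t ht d)) ∘ₗ FM d
        = FN d ∘ₗ (∑ g : G, pdHom M N g (φf g).1 (qmap s hs d)) := by
    intro φf d
    have main : ∀ (d : Quotient (MulAction.orbitRel G A)) (a : A)
        (ea : Quotient.mk (MulAction.orbitRel G A) a = d)
        (hsa : Quotient.mk (MulAction.orbitRel G V) (s a) = qmap s hs d) (m : M (s a)),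
        (∑ g : G, pdHom M N g (φf g).1 (qmap t ht d))
            (FM d (DirectSum.lof k (OrbV (qmap s hs d)) (fun y => M y.1) ⟨s a, hsa⟩ m))
          = FN d ((∑ g : G, pdHom M N g (φf g).1 (qmap s hs d))
              (DirectSum.lof k (OrbV (qmap s hs d)) (fun y => M y.1) ⟨s a, hsa⟩ m)) := by
      intro d a ea
      subst ea
      intro hsa m
      rw [hFM' _ a rfl hsa (@id (Quotient.mk (MulAction.orbitRel G V) (t a) = qmap t ht (Quotient.mk (MulAction.orbitRel G A) a)) rfl) m]
      rw [LinearMap.sum_apply, LinearMap.sum_apply, map_sum]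
      refine Finset.sum_congr rfl fun g _ => ?_
      rw [pdHom_lof, pdHom_lof]
      exact key g (φf g).1 (φf g).2 a m
    induction d using Quotient.ind with
    | _ a₀ =>
      refine DirectSum.linearMap_ext k fun i => ?_
      obtain ⟨w, hw⟩ := i
      obtain ⟨h, hh⟩ := Quotient.exact hw
      have hw' : w = s (h • a₀) := by rw [hs]; exact hh.symm
      subst hw'
      refine LinearMap.ext fun m => ?_
      simp only [LinearMap.comp_apply]
      exact main _ (h • a₀) (mkA_smul h a₀) hw m
  -- component extraction
  have eval : ∀ (φf : ∀ g : G, {φ : ∀ v : V, M v →ₗ[k] N (g⁻¹ • v) //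
        ∀ (a : A) (x : M (s a)), φ (t a) (fM a x)
          = (ht g⁻¹ a) ▸ (fN (g⁻¹ • a) ((hs g⁻¹ a).symm ▸ (φ (s a) x)))})
      (g : G) (v : V) (m : M v),
      DirectSum.component k (OrbV (Quotient.mk (MulAction.orbitRel G V) v)) (fun z => N z.1)
          ⟨g⁻¹ • v, mk_smul g⁻¹ v⟩
          ((∑ h : G, pdHom M N h (φf h).1 (Quotient.mk (MulAction.orbitRel G V) v))
            (DirectSum.lof k (OrbV (Quotient.mk (MulAction.orbitRel G V) v))
              (fun y => M y.1) ⟨v, rfl⟩ m))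
        = (φf g).1 v m := by
    intro φf g v m
    rw [LinearMap.sum_apply]
    have e1 : ∀ h : G, pdHom M N h (φf h).1 (Quotient.mk (MulAction.orbitRel G V) v)
        (DirectSum.lof k (OrbV (Quotient.mk (MulAction.orbitRel G V) v))
          (fun y => M y.1) ⟨v, rfl⟩ m)
      = DirectSum.lof k (OrbV (Quotient.mk (MulAction.orbitRel G V) v))
          (fun z => N z.1) ⟨h⁻¹ • v, mk_smul h⁻¹ v⟩ ((φf h).1 v m) :=
      fun h => pdHom_lof M N h (φf h).1 _ v rfl m
    rw [Finset.sum_congr rfl (fun h _ => e1 h)]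
    exact component_sum N hfree g v (fun h => (φf h).1 v m)
  -- the forward map
  let Φf : (∀ g : G, {φ : ∀ v : V, M v →ₗ[k] N (g⁻¹ • v) //
        ∀ (a : A) (x : M (s a)), φ (t a) (fM a x)
          = (ht g⁻¹ a) ▸ (fN (g⁻¹ • a) ((hs g⁻¹ a).symm ▸ (φ (s a) x)))}) →
      {Ψ : ∀ c : Quotient (MulAction.orbitRel G V),
          (⨁ y : {v : V // Quotient.mk (MulAction.orbitRel G V) v = c}, M y.1) →ₗ[k]
            ⨁ y : {v : V // Quotient.mk (MulAction.orbitRel G V) v = c}, N y.1 //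
        ∀ d : Quotient (MulAction.orbitRel G A),
          Ψ (qmap t ht d) ∘ₗ FM d = FN d ∘ₗ Ψ (qmap s hs d)} :=
    fun φf => ⟨fun c => ∑ g : G, pdHom M N g (φf g).1 c, prop φf⟩
  have hinj : Function.Injective Φf := by
    intro φ φ' hΦ
    funext g
    apply Subtype.ext
    funext v
    refine LinearMap.ext fun m => ?_
    have hc := congrFun (congrArg Subtype.val hΦ) (Quotient.mk (MulAction.orbitRel G V) v)
    have h2 := congrArg (fun (L : (⨁ y : OrbV (Quotient.mk (MulAction.orbitRel G V) v), M y.1)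
        →ₗ[k] ⨁ y : OrbV (Quotient.mk (MulAction.orbitRel G V) v), N y.1) =>
      DirectSum.component k (OrbV (Quotient.mk (MulAction.orbitRel G V) v)) (fun z => N z.1)
        ⟨g⁻¹ • v, mk_smul g⁻¹ v⟩
        (L (DirectSum.lof k (OrbV (Quotient.mk (MulAction.orbitRel G V) v))
          (fun y => M y.1) ⟨v, rfl⟩ m))) hc
    exact (eval φ g v m).symm.trans (h2.trans (eval φ' g v m))
  have hsurj : Function.Surjective Φf := by
    rintro ⟨Ψ, hΨ⟩
    let ψ : ∀ g : G, ∀ v : V, M v →ₗ[k] N (g⁻¹ • v) := fun g v =>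
      (DirectSum.component k (OrbV (Quotient.mk (MulAction.orbitRel G V) v)) (fun z => N z.1)
        ⟨g⁻¹ • v, mk_smul g⁻¹ v⟩) ∘ₗ (Ψ (Quotient.mk (MulAction.orbitRel G V) v)) ∘ₗ
        (DirectSum.lof k (OrbV (Quotient.mk (MulAction.orbitRel G V) v))
          (fun y => M y.1) ⟨v, rfl⟩)
    have hψ : ∀ (g : G) (a : A) (x : M (s a)), ψ g (t a) (fM a x)
        = (ht g⁻¹ a) ▸ (fN (g⁻¹ • a) ((hs g⁻¹ a).symm ▸ (ψ g (s a) x))) := by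
      intro g a x
      have h1 : Ψ (qmap t ht (Quotient.mk (MulAction.orbitRel G A) a))
          (DirectSum.lof k (OrbV (qmap t ht (Quotient.mk (MulAction.orbitRel G A) a)))
            (fun y => M y.1) ⟨t a, rfl⟩ (fM a x))
          = FN (Quotient.mk (MulAction.orbitRel G A) a)
              (Ψ (qmap s hs (Quotient.mk (MulAction.orbitRel G A) a))
                (DirectSum.lof k (OrbV (qmap s hs (Quotient.mk (MulAction.orbitRel G A) a)))
                  (fun y => M y.1) ⟨s a, rfl⟩ x)) := by
        rw [← hFM a x]
        exact LinearMap.congr_fun (hΨ (Quotient.mk (MulAction.orbitRel G A) a)) _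
      have h2 : Ψ (qmap s hs (Quotient.mk (MulAction.orbitRel G A) a))
          (DirectSum.lof k (OrbV (qmap s hs (Quotient.mk (MulAction.orbitRel G A) a)))
            (fun y => M y.1) ⟨s a, rfl⟩ x)
          = ∑ h : G, DirectSum.lof k (OrbV (qmap s hs (Quotient.mk (MulAction.orbitRel G A) a)))
              (fun z => N z.1) ⟨h⁻¹ • s a, pfS h a⟩ (ψ h (s a) x) :=
        (sum_components (k := k) N hfree (s a) _).symm
      have h4 : ψ g (t a) (fM a x)
          = DirectSum.component k (OrbV (qmap t ht (Quotient.mk (MulAction.orbitRel G A) a)))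
              (fun z => N z.1) ⟨g⁻¹ • t a, pfT g a⟩
              (∑ h : G, DirectSum.lof k (OrbV (qmap t ht (Quotient.mk (MulAction.orbitRel G A) a)))
                (fun z => N z.1) ⟨t (h⁻¹ • a), pfT' h a⟩
                (fN (h⁻¹ • a) ((hs h⁻¹ a).symm ▸ (ψ h (s a) x)))) := by
        show DirectSum.component k (OrbV (qmap t ht (Quotient.mk (MulAction.orbitRel G A) a)))
            (fun z => N z.1) ⟨g⁻¹ • t a, pfT g a⟩
            (Ψ (qmap t ht (Quotient.mk (MulAction.orbitRel G A) a))
              (DirectSum.lof k (OrbV (qmap t ht (Quotient.mk (MulAction.orbitRel G A) a)))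
                (fun y => M y.1) ⟨t a, rfl⟩ (fM a x))) = _
        rw [h1, h2, map_sum]
        congr 1
        refine Finset.sum_congr rfl fun h _ => ?_
        exact FNlof h a (ψ h (s a) x)
      rw [h4, map_sum, Finset.sum_eq_single g]
      · exact component_cast N (ht g⁻¹ a) (pfT' g a) (pfT g a) _ _
          (HEq.symm (eqRec_heq _ _))
      · intro h _ hne
        rw [DirectSum.component.of, dif_neg]
        intro he
        apply hne
        have he' : t (h⁻¹ • a) = g⁻¹ • t a := congrArg Subtype.val he
        rw [ht] at he'
        exact inv_injective (smul_cancel hfree he')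
      · simp
    refine ⟨fun g => ⟨ψ g, hψ g⟩, ?_⟩
    apply Subtype.ext
    funext c
    show (∑ g : G, pdHom M N g (ψ g) c) = Ψ c
    refine DirectSum.linearMap_ext k fun i => ?_
    obtain ⟨w, hw⟩ := i
    subst hw
    refine LinearMap.ext fun m => ?_
    simp only [LinearMap.comp_apply]
    rw [LinearMap.sum_apply]
    rw [Finset.sum_congr rfl (fun g _ => pdHom_lof M N g (ψ g) _ w rfl m)]
    exact sum_components (k := k) N hfree w _
  exact ⟨Equiv.ofBijective Φf ⟨hinj, hsurj⟩, fun φ c => rfl⟩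

end Stmt4
end

section
/- Let x₁, x₂ be indeterminates over ℚ and define a sequence in ℚ(x₁, x₂) by a₁ = x₁, a₂ = x₂, and the alternating recurrence a_{2k+1} = (a_{2k} + 1)/a_{2k−1} and a_{2k+2} = (a_{2k+1}² + a_{2k+1} + 1)/a_{2k}. Then the sequence is periodic with period 6; explicitly a₃ = (x₂+1)/x₁, a₄ = (x₁² + x₂² + x₁x₂ + x₁ + 2x₂ + 1)/(x₁²x₂), a₅ = (x₁² + x₁ + x₂ + 1)/(x₁x₂), a₆ = (x₁² + x₁ + 1)/x₂, a₇ = x₁, and a₈ = x₂. -/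
open MvPolynomial

noncomputable section

namespace Stmt12

/-- The rational function field `ℚ(x₁,x₂)`. -/
abbrev F : Type := FractionRing (MvPolynomial (Fin 2) ℚ)

def x1 : F := algebraMap (MvPolynomial (Fin 2) ℚ) F (X 0)
def x2 : F := algebraMap (MvPolynomial (Fin 2) ℚ) F (X 1)

lemma alg_ne_zero (p : MvPolynomial (Fin 2) ℚ)
    (hp : eval (fun _ => (1:ℚ)) p ≠ 0) :
    algebraMap (MvPolynomial (Fin 2) ℚ) F p ≠ 0 := by
  intro h
  have hz : p = 0 := IsFractionRing.injective (MvPolynomial (Fin 2) ℚ) F (by simpa using h)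
  rw [hz] at hp; simp at hp

set_option maxHeartbeats 1000000 in
/-- The generalized cluster recurrence of the triangle with one orbifold point,
with alternating exchange polynomials `u+1` and `u²+u+1`, is periodic of
period 6, with the six generalized cluster variables as listed. -/
theorem stmt_12 (a : ℕ → F) (h1 : a 1 = x1) (h2 : a 2 = x2)
    (hodd : ∀ k : ℕ, 1 ≤ k → a (2 * k + 1) = (a (2 * k) + 1) / a (2 * k - 1))
    (heven : ∀ k : ℕ, 1 ≤ k →
      a (2 * k + 2) = ((a (2 * k + 1)) ^ 2 + a (2 * k + 1) + 1) / a (2 * k)) :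
    a 3 = (x2 + 1) / x1 ∧
    a 4 = (x1 ^ 2 + x2 ^ 2 + x1 * x2 + x1 + 2 * x2 + 1) / (x1 ^ 2 * x2) ∧
    a 5 = (x1 ^ 2 + x1 + x2 + 1) / (x1 * x2) ∧
    a 6 = (x1 ^ 2 + x1 + 1) / x2 ∧
    a 7 = x1 ∧ a 8 = x2 ∧
    ∀ n : ℕ, 1 ≤ n → a (n + 6) = a n := by
  have hx1 : x1 ≠ 0 := alg_ne_zero _ (by simp)
  have hx2 : x2 ≠ 0 := alg_ne_zero _ (by simp)
  have hA : x2 + 1 ≠ 0 := by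
    have := alg_ne_zero (X 1 + 1) (by norm_num)
    simpa [x2] using this
  have hB : x1 ^ 2 + x2 ^ 2 + x1 * x2 + x1 + 2 * x2 + 1 ≠ 0 := by
    have := alg_ne_zero (X 0 ^ 2 + X 1 ^ 2 + X 0 * X 1 + X 0 + 2 * X 1 + 1) (by norm_num)
    simpa [x1, x2, map_ofNat] using this
  have hC : x1 ^ 2 + x1 + x2 + 1 ≠ 0 := by
    have := alg_ne_zero (X 0 ^ 2 + X 0 + X 1 + 1) (by norm_num)
    simpa [x1, x2] using this
  have hD : x1 ^ 2 + x1 + 1 ≠ 0 := by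
    have := alg_ne_zero (X 0 ^ 2 + X 0 + 1) (by norm_num)
    simpa [x1] using this
  have e3 : a 3 = (x2 + 1) / x1 := by
    have h := hodd 1 le_rfl
    norm_num at h
    rw [h, h1, h2]
  have e4 : a 4 = (x1 ^ 2 + x2 ^ 2 + x1 * x2 + x1 + 2 * x2 + 1) / (x1 ^ 2 * x2) := by
    have h := heven 1 le_rfl
    norm_num at h
    rw [h, e3, h2]
    field_simp
    ring
  have e5 : a 5 = (x1 ^ 2 + x1 + x2 + 1) / (x1 * x2) := by
    have h := hodd 2 (by norm_num)
    norm_num at h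
    rw [h, e4, e3]
    field_simp
    ring
  have e6 : a 6 = (x1 ^ 2 + x1 + 1) / x2 := by
    have h := heven 2 (by norm_num)
    norm_num at h
    rw [h, e5, e4]
    field_simp
    rw [div_eq_iff (by intro h0; apply hB; linear_combination h0)]
    ring
  have e7 : a 7 = x1 := by
    have h := hodd 3 (by norm_num)
    norm_num at h
    rw [h, e6, e5]
    field_simp
    rw [div_eq_one_iff_eq (by intro h0; apply hC; linear_combination h0)]
    ring
  have e8 : a 8 = x2 := by
    have h := heven 3 (by norm_num)
    norm_num at h
    rw [h, e7, e6]
    field_simp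
    exact div_self (by intro h0; apply hD; linear_combination h0)
  refine ⟨e3, e4, e5, e6, e7, e8, ?_⟩
  intro n
  induction n using Nat.strong_induction_on with
  | _ n ih =>
    intro hn
    rcases eq_or_lt_of_le hn with h' | h'
    · rw [← h', e7, h1]
    rcases eq_or_lt_of_le (show 2 ≤ n by omega) with h'' | h''
    · rw [← h'', e8, h2]
    have h3 : 3 ≤ n := by omega
    rcases Nat.even_or_odd n with ⟨k, hk⟩ | ⟨k, hk⟩
    · -- n = 2k with k ≥ 2; write k = j+1, n = 2j+2, j ≥ 1
      obtain ⟨j, hj⟩ : ∃ j, k = j + 1 := ⟨k - 1, by omega⟩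
      have hj1 : 1 ≤ j := by omega
      have hrec := heven (j + 3) (by omega)
      have hrec' := heven j hj1
      have ih1 := ih (2 * j + 1) (by omega) (by omega)
      have ih2 := ih (2 * j) (by omega) (by omega)
      have i0 : n + 6 = 2 * (j + 3) + 2 := by omega
      have i1 : 2 * (j + 3) + 1 = 2 * j + 1 + 6 := by omega
      have i2 : 2 * (j + 3) = 2 * j + 6 := by omega
      have i3 : n = 2 * j + 2 := by omega
      rw [i0, hrec, i1, i2, ih1, ih2, ← hrec', ← i3]
    · -- n = 2k+1, k ≥ 1
      have hk1 : 1 ≤ k := by omega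
      have hrec := hodd (k + 3) (by omega)
      have hrec' := hodd k hk1
      have ih1 := ih (2 * k) (by omega) (by omega)
      have ih2 := ih (2 * k - 1) (by omega) (by omega)
      have i0 : n + 6 = 2 * (k + 3) + 1 := by omega
      have i1 : 2 * (k + 3) = 2 * k + 6 := by omega
      have i2 : 2 * (k + 3) - 1 = (2 * k - 1) + 6 := by omega
      have i3 : n = 2 * k + 1 := by omega
      rw [i0, hrec, i2, i1, ih1, ih2, ← hrec', ← i3]

end Stmt12
end
end
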